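/- arXiv:1911.12737 — 2 statements merged into one kernel-verified Lean document; each statement's English description precedes it below -/
import Mathlib

section
/- Correctness of result: for every LL(1) focused syntax (s, c), result (s, c) = nullable? (unfocus (s, c)), i.e. result returns exactly the value that the unfocused syntax associates with the empty token sequence, if any. -/
/-! Replacing a nullable component `s` of an LL(1) syntax by `eps v`, where `v` is its null value,
changes neither the null value of the whole nor its LL(1)-ness: in an LL(1) syntax the null value
is unique, so `eps v` has the same null values as `s`, is productive when `s` is, and contributes
no first kinds, should-not-follow kinds or conflicts. This refinement is a congruence for `map` and
`seqn`, hence for `unfocus`. Up to such replacements, `plug v c` unfocuses to `unfocus s c`, so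
`result` is correct by induction on the context; when `nullOpt s = none`, neither `s` nor
`unfocus s c` has a null value. -/


set_option autoImplicit false

/-- Context-free syntaxes (value-aware context-free expressions). -/
inductive Syn (Token Kind : Type) (Var : Type → Type) : Type → Type 1 where
  | elem (k : Kind) : Syn Token Kind Var Token
  | fail {A : Type} : Syn Token Kind Var A
  | eps {A : Type} (v : A) : Syn Token Kind Var A
  | disj {A : Type} (s₁ s₂ : Syn Token Kind Var A) : Syn Token Kind Var A
  | seqn {A B : Type} (s₁ : Syn Token Kind Var A) (s₂ : Syn Token Kind Var B) :
      Syn Token Kind Var (A × B)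
  | map {A B : Type} (f : A → B) (s : Syn Token Kind Var A) : Syn Token Kind Var B
  | var {A : Type} (x : Var A) : Syn Token Kind Var A

section

variable {Token Kind : Type} {Var : Type → Type}
variable (kd : Token → Kind) (env : ∀ A : Type, Var A → Syn Token Kind Var A)

/-- Semantics of syntaxes. -/
inductive Matches : ∀ {A : Type}, Syn Token Kind Var A → List Token → A → Prop where
  | elem {k : Kind} {t : Token} (h : kd t = k) : Matches (Syn.elem k) [t] t
  | eps {A : Type} (v : A) : Matches (Syn.eps v) [] v
  | disjL {A : Type} {s₁ s₂ : Syn Token Kind Var A} {ts : List Token} {v : A} :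
      Matches s₁ ts v → Matches (Syn.disj s₁ s₂) ts v
  | disjR {A : Type} {s₁ s₂ : Syn Token Kind Var A} {ts : List Token} {v : A} :
      Matches s₂ ts v → Matches (Syn.disj s₁ s₂) ts v
  | seqn {A B : Type} {s₁ : Syn Token Kind Var A} {s₂ : Syn Token Kind Var B}
      {ts₁ ts₂ : List Token} {v₁ : A} {v₂ : B} :
      Matches s₁ ts₁ v₁ → Matches s₂ ts₂ v₂ →
      Matches (Syn.seqn s₁ s₂) (ts₁ ++ ts₂) (v₁, v₂)
  | map {A B : Type} (f : A → B) {s : Syn Token Kind Var A} {ts : List Token} {v : A} :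
      Matches s ts v → Matches (Syn.map f s) ts (f v)
  | var {A : Type} (x : Var A) {ts : List Token} {v : A} :
      Matches (env A x) ts v → Matches (Syn.var x) ts v

/-- Productivity. -/
inductive Productive : ∀ {A : Type}, Syn Token Kind Var A → Prop where
  | eps {A : Type} (v : A) : Productive (Syn.eps v)
  | elem (k : Kind) : Productive (Syn.elem k)
  | disjL {A : Type} {s₁ s₂ : Syn Token Kind Var A} :
      Productive s₁ → Productive (Syn.disj s₁ s₂)
  | disjR {A : Type} {s₁ s₂ : Syn Token Kind Var A} :
      Productive s₂ → Productive (Syn.disj s₁ s₂)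
  | seqn {A B : Type} {s₁ : Syn Token Kind Var A} {s₂ : Syn Token Kind Var B} :
      Productive s₁ → Productive s₂ → Productive (Syn.seqn s₁ s₂)
  | map {A B : Type} (f : A → B) {s : Syn Token Kind Var A} :
      Productive s → Productive (Syn.map f s)
  | var {A : Type} (x : Var A) : Productive (env A x) → Productive (Syn.var x)

/-- Nullability, with associated value. -/
inductive Nullable : ∀ {A : Type}, Syn Token Kind Var A → A → Prop where
  | eps {A : Type} (v : A) : Nullable (Syn.eps v) v
  | disjL {A : Type} {s₁ s₂ : Syn Token Kind Var A} {v : A} :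
      Nullable s₁ v → Nullable (Syn.disj s₁ s₂) v
  | disjR {A : Type} {s₁ s₂ : Syn Token Kind Var A} {v : A} :
      Nullable s₂ v → Nullable (Syn.disj s₁ s₂) v
  | seqn {A B : Type} {s₁ : Syn Token Kind Var A} {s₂ : Syn Token Kind Var B} {v₁ : A} {v₂ : B} :
      Nullable s₁ v₁ → Nullable s₂ v₂ → Nullable (Syn.seqn s₁ s₂) (v₁, v₂)
  | map {A B : Type} (f : A → B) {s : Syn Token Kind Var A} {v : A} :
      Nullable s v → Nullable (Syn.map f s) (f v)
  | var {A : Type} (x : Var A) {v : A} : Nullable (env A x) v → Nullable (Syn.var x) v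

/-- First sets: `InFirst env k s` means `k ∈ First s`. -/
inductive InFirst : ∀ {A : Type}, Kind → Syn Token Kind Var A → Prop where
  | elem (k : Kind) : InFirst k (Syn.elem k)
  | disjL {A : Type} {k : Kind} {s₁ s₂ : Syn Token Kind Var A} :
      InFirst k s₁ → InFirst k (Syn.disj s₁ s₂)
  | disjR {A : Type} {k : Kind} {s₁ s₂ : Syn Token Kind Var A} :
      InFirst k s₂ → InFirst k (Syn.disj s₁ s₂)
  | seqnL {A B : Type} {k : Kind} {s₁ : Syn Token Kind Var A} {s₂ : Syn Token Kind Var B} :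
      InFirst k s₁ → Productive env s₂ → InFirst k (Syn.seqn s₁ s₂)
  | seqnR {A B : Type} {k : Kind} {s₁ : Syn Token Kind Var A} {s₂ : Syn Token Kind Var B}
      {v : A} : Nullable env s₁ v → InFirst k s₂ → InFirst k (Syn.seqn s₁ s₂)
  | map {A B : Type} {k : Kind} (f : A → B) {s : Syn Token Kind Var A} :
      InFirst k s → InFirst k (Syn.map f s)
  | var {A : Type} {k : Kind} (x : Var A) : InFirst k (env A x) → InFirst k (Syn.var x)

/-- Should-not-follow sets: `InSNF env k s` means `k ∈ ShouldNotFollow s`. -/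
inductive InSNF : ∀ {A : Type}, Kind → Syn Token Kind Var A → Prop where
  | disjL {A : Type} {k : Kind} {s₁ s₂ : Syn Token Kind Var A} :
      InSNF k s₁ → InSNF k (Syn.disj s₁ s₂)
  | disjR {A : Type} {k : Kind} {s₁ s₂ : Syn Token Kind Var A} :
      InSNF k s₂ → InSNF k (Syn.disj s₁ s₂)
  | disjFN {A : Type} {k : Kind} {s₁ s₂ : Syn Token Kind Var A} {v : A} :
      InFirst env k s₁ → Nullable env s₂ v → InSNF k (Syn.disj s₁ s₂)
  | disjNF {A : Type} {k : Kind} {s₁ s₂ : Syn Token Kind Var A} {v : A} :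
      Nullable env s₁ v → InFirst env k s₂ → InSNF k (Syn.disj s₁ s₂)
  | seqnL {A B : Type} {k : Kind} {s₁ : Syn Token Kind Var A} {s₂ : Syn Token Kind Var B}
      {v : B} : InSNF k s₁ → Nullable env s₂ v → InSNF k (Syn.seqn s₁ s₂)
  | seqnR {A B : Type} {k : Kind} {s₁ : Syn Token Kind Var A} {s₂ : Syn Token Kind Var B} :
      Productive env s₁ → InSNF k s₂ → InSNF k (Syn.seqn s₁ s₂)
  | map {A B : Type} {k : Kind} (f : A → B) {s : Syn Token Kind Var A} :
      InSNF k s → InSNF k (Syn.map f s)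
  | var {A : Type} {k : Kind} (x : Var A) : InSNF k (env A x) → InSNF k (Syn.var x)

/-- LL(1) conflicts. A syntax `s` is LL(1) iff `¬ HasConflict env s`. -/
inductive HasConflict : ∀ {A : Type}, Syn Token Kind Var A → Prop where
  | disjNN {A : Type} {s₁ s₂ : Syn Token Kind Var A} {v₁ v₂ : A} :
      Nullable env s₁ v₁ → Nullable env s₂ v₂ → HasConflict (Syn.disj s₁ s₂)
  | disjFF {A : Type} {s₁ s₂ : Syn Token Kind Var A} {k : Kind} :
      InFirst env k s₁ → InFirst env k s₂ → HasConflict (Syn.disj s₁ s₂)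
  | disjL {A : Type} {s₁ s₂ : Syn Token Kind Var A} :
      HasConflict s₁ → HasConflict (Syn.disj s₁ s₂)
  | disjR {A : Type} {s₁ s₂ : Syn Token Kind Var A} :
      HasConflict s₂ → HasConflict (Syn.disj s₁ s₂)
  | seqnSF {A B : Type} {s₁ : Syn Token Kind Var A} {s₂ : Syn Token Kind Var B} {k : Kind} :
      InSNF env k s₁ → InFirst env k s₂ → HasConflict (Syn.seqn s₁ s₂)
  | seqnL {A B : Type} {s₁ : Syn Token Kind Var A} {s₂ : Syn Token Kind Var B} :
      HasConflict s₁ → HasConflict (Syn.seqn s₁ s₂)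
  | seqnR {A B : Type} {s₁ : Syn Token Kind Var A} {s₂ : Syn Token Kind Var B} :
      HasConflict s₂ → HasConflict (Syn.seqn s₁ s₂)
  | map {A B : Type} (f : A → B) {s : Syn Token Kind Var A} :
      HasConflict s → HasConflict (Syn.map f s)
  | var {A : Type} (x : Var A) : HasConflict (env A x) → HasConflict (Syn.var x)

end

/-- Layers of a context, with above type `A` and below type `B`. -/
inductive Layer (Token Kind : Type) (Var : Type → Type) : Type → Type → Type 1 where
  | apply {A B : Type} (f : A → B) : Layer Token Kind Var A B
  | prepend {A C : Type} (v : C) : Layer Token Kind Var A (C × A)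
  | followBy {A C : Type} (s : Syn Token Kind Var C) : Layer Token Kind Var A (A × C)

/-- Type-aligned contexts (stacks of layers). -/
inductive Ctx (Token Kind : Type) (Var : Type → Type) : Type → Type → Type 1 where
  | nil {A : Type} : Ctx Token Kind Var A A
  | cons {A B C : Type} (l : Layer Token Kind Var A B) (c : Ctx Token Kind Var B C) :
      Ctx Token Kind Var A C

section

variable {Token Kind : Type} {Var : Type → Type}

def Ctx.isNil : ∀ {A B : Type}, Ctx Token Kind Var A B → Bool
  | _, _, Ctx.nil => true
  | _, _, Ctx.cons _ _ => false

/-- Unfocusing a focused syntax. -/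
def unfocus : ∀ {A B : Type}, Syn Token Kind Var A → Ctx Token Kind Var A B →
    Syn Token Kind Var B
  | _, _, s, Ctx.nil => s
  | _, _, s, Ctx.cons (Layer.apply f) c => unfocus (Syn.map f s) c
  | _, _, s, Ctx.cons (Layer.prepend v) c => unfocus (Syn.seqn (Syn.eps v) s) c
  | _, _, s, Ctx.cons (Layer.followBy s') c => unfocus (Syn.seqn s s') c

/-- Focused syntaxes with below type `B`. -/
def Focused (Token Kind : Type) (Var : Type → Type) (B : Type) : Type 1 :=
  (A : Type) × Syn Token Kind Var A × Ctx Token Kind Var A B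

def unfocusF {B : Type} (fs : Focused Token Kind Var B) : Syn Token Kind Var B :=
  unfocus fs.2.1 fs.2.2

def focusF {A : Type} (s : Syn Token Kind Var A) : Focused Token Kind Var A :=
  ⟨A, s, Ctx.nil⟩

/-- Plugging a value into a context. -/
def plug : ∀ {A B : Type}, A → Ctx Token Kind Var A B → Focused Token Kind Var B
  | A, _, v, Ctx.nil => ⟨A, Syn.eps v, Ctx.nil⟩
  | _, _, v, Ctx.cons (Layer.apply f) c => plug (f v) c
  | _, _, v, Ctx.cons (Layer.prepend v') c => plug (v', v) c
  | _, _, v, Ctx.cons (Layer.followBy s) c => ⟨_, s, Ctx.cons (Layer.prepend v) c⟩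

end

section

variable {Token Kind : Type} {Var : Type → Type}
  {env : ∀ A : Type, Var A → Syn Token Kind Var A}

/-! `cases` cannot invert a derivation about `Syn.seqn s₁ s₂`: unifying `A × B` with `A' × B'`
would need injectivity of `Prod` on types. The `seqn` inversion lemmas eliminate into these
predicates instead. -/

def Syn.IfSeqn (P : ∀ {A B : Type}, Syn Token Kind Var A → Syn Token Kind Var B → Prop) :
    ∀ {C : Type}, Syn Token Kind Var C → Prop
  | _, Syn.seqn s₁ s₂ => P s₁ s₂
  | _, _ => True

def Syn.IfSeqnAt
    (P : ∀ {A B : Type}, Syn Token Kind Var A → Syn Token Kind Var B → A × B → Prop) :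
    ∀ {C : Type}, Syn Token Kind Var C → C → Prop
  | _, Syn.seqn s₁ s₂, u => P s₁ s₂ u
  | _, _, _ => True

theorem nullable_seqn_iff {A B : Type} {s₁ : Syn Token Kind Var A} {s₂ : Syn Token Kind Var B}
    {u : A × B} :
    Nullable env (Syn.seqn s₁ s₂) u ↔ Nullable env s₁ u.1 ∧ Nullable env s₂ u.2 := by
  refine ⟨fun h => ?_, fun h => .seqn h.1 h.2⟩
  suffices ∀ {C : Type} {t : Syn Token Kind Var C} {w : C}, Nullable env t w →
      t.IfSeqnAt (fun s₁ s₂ w => Nullable env s₁ w.1 ∧ Nullable env s₂ w.2) w from this h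
  intro C t w h
  cases h with
  | seqn h₁ h₂ => exact ⟨h₁, h₂⟩
  | _ => trivial

theorem productive_seqn_iff {A B : Type} {s₁ : Syn Token Kind Var A}
    {s₂ : Syn Token Kind Var B} :
    Productive env (Syn.seqn s₁ s₂) ↔ Productive env s₁ ∧ Productive env s₂ := by
  refine ⟨fun h => ?_, fun h => .seqn h.1 h.2⟩
  suffices ∀ {C : Type} {t : Syn Token Kind Var C}, Productive env t →
      t.IfSeqn (fun s₁ s₂ => Productive env s₁ ∧ Productive env s₂) from this h
  intro C t h
  cases h with
  | seqn h₁ h₂ => exact ⟨h₁, h₂⟩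
  | _ => trivial

theorem inFirst_seqn_iff {A B : Type} {s₁ : Syn Token Kind Var A} {s₂ : Syn Token Kind Var B}
    {k : Kind} : InFirst env k (Syn.seqn s₁ s₂) ↔
      (InFirst env k s₁ ∧ Productive env s₂) ∨
        ((∃ v, Nullable env s₁ v) ∧ InFirst env k s₂) := by
  refine ⟨fun h => ?_, ?_⟩
  · suffices ∀ {C : Type} {t : Syn Token Kind Var C}, InFirst env k t →
        t.IfSeqn (fun s₁ s₂ => (InFirst env k s₁ ∧ Productive env s₂) ∨
          ((∃ v, Nullable env s₁ v) ∧ InFirst env k s₂)) from this h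
    intro C t h
    cases h with
    | seqnL h₁ h₂ => exact .inl ⟨h₁, h₂⟩
    | seqnR h₁ h₂ => exact .inr ⟨⟨_, h₁⟩, h₂⟩
    | _ => trivial
  · rintro (⟨h₁, h₂⟩ | ⟨⟨v, h₁⟩, h₂⟩)
    exacts [.seqnL h₁ h₂, .seqnR h₁ h₂]

theorem inSNF_seqn_iff {A B : Type} {s₁ : Syn Token Kind Var A} {s₂ : Syn Token Kind Var B}
    {k : Kind} : InSNF env k (Syn.seqn s₁ s₂) ↔
      (InSNF env k s₁ ∧ ∃ v, Nullable env s₂ v) ∨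
        (Productive env s₁ ∧ InSNF env k s₂) := by
  refine ⟨fun h => ?_, ?_⟩
  · suffices ∀ {C : Type} {t : Syn Token Kind Var C}, InSNF env k t →
        t.IfSeqn (fun s₁ s₂ => (InSNF env k s₁ ∧ ∃ v, Nullable env s₂ v) ∨
          (Productive env s₁ ∧ InSNF env k s₂)) from this h
    intro C t h
    cases h with
    | seqnL h₁ h₂ => exact .inl ⟨h₁, _, h₂⟩
    | seqnR h₁ h₂ => exact .inr ⟨h₁, h₂⟩
    | _ => trivial
  · rintro (⟨h₁, v, h₂⟩ | ⟨h₁, h₂⟩)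
    exacts [.seqnL h₁ h₂, .seqnR h₁ h₂]

theorem hasConflict_seqn_iff {A B : Type} {s₁ : Syn Token Kind Var A}
    {s₂ : Syn Token Kind Var B} : HasConflict env (Syn.seqn s₁ s₂) ↔
      (∃ k, InSNF env k s₁ ∧ InFirst env k s₂) ∨
        HasConflict env s₁ ∨ HasConflict env s₂ := by
  refine ⟨fun h => ?_, ?_⟩
  · suffices ∀ {C : Type} {t : Syn Token Kind Var C}, HasConflict env t →
        t.IfSeqn (fun s₁ s₂ => (∃ k, InSNF env k s₁ ∧ InFirst env k s₂) ∨
          HasConflict env s₁ ∨ HasConflict env s₂) from this h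
    intro C t h
    cases h with
    | seqnSF h₁ h₂ => exact .inl ⟨_, h₁, h₂⟩
    | seqnL h => exact .inr (.inl h)
    | seqnR h => exact .inr (.inr h)
    | _ => trivial
  · rintro (⟨k, h₁, h₂⟩ | h | h)
    exacts [.seqnSF h₁ h₂, .seqnL h, .seqnR h]

theorem Nullable.productive {A : Type} {s : Syn Token Kind Var A} {v : A}
    (h : Nullable env s v) : Productive env s := by
  induction h with
  | eps v => exact .eps v
  | disjL _ ih => exact .disjL ih
  | disjR _ ih => exact .disjR ih
  | seqn _ _ ih₁ ih₂ => exact .seqn ih₁ ih₂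
  | map f _ ih => exact .map f ih
  | var x _ ih => exact .var x ih

theorem Nullable.eq_of_not_hasConflict {A : Type} {s : Syn Token Kind Var A} {v₁ v₂ : A}
    (h₁ : Nullable env s v₁) (h₂ : Nullable env s v₂) (hs : ¬ HasConflict env s) :
    v₁ = v₂ := by
  induction h₁ with
  | eps v => cases h₂; rfl
  | disjL h ih =>
    cases h₂ with
    | disjL h₂ => exact ih h₂ (mt .disjL hs)
    | disjR h₂ => exact absurd (.disjNN h h₂) hs
  | disjR h ih =>
    cases h₂ with
    | disjL h₂ => exact absurd (.disjNN h₂ h) hs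
    | disjR h₂ => exact ih h₂ (mt .disjR hs)
  | seqn _ _ ih₁ ih₂ =>
    obtain ⟨h₂₁, h₂₂⟩ := nullable_seqn_iff.1 h₂
    exact Prod.ext (ih₁ h₂₁ (mt .seqnL hs)) (ih₂ h₂₂ (mt .seqnR hs))
  | map f _ ih =>
    cases h₂ with
    | map _ h₂ => rw [ih h₂ (mt (.map f) hs)]
  | var x _ ih =>
    cases h₂ with
    | var _ h₂ => exact ih h₂ (mt (.var x) hs)

theorem hasConflict_unfocus {A B : Type} {s : Syn Token Kind Var A}
    (c : Ctx Token Kind Var A B) (h : HasConflict env s) : HasConflict env (unfocus s c) := by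
  induction c with
  | nil => exact h
  | cons l c ih =>
    cases l with
    | apply f => exact ih (.map f h)
    | prepend v => exact ih (.seqnR h)
    | followBy s' => exact ih (.seqnL h)

theorem exists_nullable_of_nullable_unfocus {A B : Type} {s : Syn Token Kind Var A}
    {c : Ctx Token Kind Var A B} {w : B} (h : Nullable env (unfocus s c) w) :
    ∃ v, Nullable env s v := by
  induction c with
  | nil => exact ⟨w, h⟩
  | cons l c ih =>
    cases l with
    | apply f =>
      obtain ⟨_, hv⟩ := ih h
      cases hv with
      | map _ hv => exact ⟨_, hv⟩
    | prepend v' =>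
      obtain ⟨v, hv⟩ := ih h
      exact ⟨v.2, (nullable_seqn_iff.1 hv).2⟩
    | followBy s' =>
      obtain ⟨v, hv⟩ := ih h
      exact ⟨v.1, (nullable_seqn_iff.1 hv).1⟩

variable (env) in
/-- What the rules for `map` and `seqn` consult about a component, so that replacing `b` by `a`
inside any context keeps the null values and creates no conflict. -/
structure Syn.Refines {A : Type} (a b : Syn Token Kind Var A) : Prop where
  nullable_iff : ∀ v, Nullable env a v ↔ Nullable env b v
  productive : Productive env a → Productive env b
  inFirst : ∀ k, InFirst env k a → InFirst env k b
  inSNF : ∀ k, InSNF env k a → InSNF env k b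
  hasConflict : HasConflict env a → HasConflict env b

namespace Syn.Refines

theorem refl {A : Type} (a : Syn Token Kind Var A) : a.Refines env a :=
  ⟨fun _ => .rfl, id, fun _ => id, fun _ => id, id⟩

theorem map {A B : Type} (f : A → B) {a b : Syn Token Kind Var A} (r : a.Refines env b) :
    (Syn.map f a).Refines env (Syn.map f b) where
  nullable_iff v := by
    constructor
    · intro h; cases h with | map _ h => exact .map f ((r.nullable_iff _).1 h)
    · intro h; cases h with | map _ h => exact .map f ((r.nullable_iff _).2 h)
  productive h := by cases h with | map _ h => exact .map f (r.productive h)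
  inFirst k h := by cases h with | map _ h => exact .map f (r.inFirst k h)
  inSNF k h := by cases h with | map _ h => exact .map f (r.inSNF k h)
  hasConflict h := by cases h with | map _ h => exact .map f (r.hasConflict h)

theorem seqn {A B : Type} {a a' : Syn Token Kind Var A} {b b' : Syn Token Kind Var B}
    (ra : a.Refines env a') (rb : b.Refines env b') :
    (Syn.seqn a b).Refines env (Syn.seqn a' b') where
  nullable_iff v := by simp only [nullable_seqn_iff, ra.nullable_iff, rb.nullable_iff]
  productive h := by
    rw [productive_seqn_iff] at h ⊢
    exact ⟨ra.productive h.1, rb.productive h.2⟩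
  inFirst k h := by
    rcases inFirst_seqn_iff.1 h with ⟨h₁, h₂⟩ | ⟨⟨v, h₁⟩, h₂⟩
    exacts [.seqnL (ra.inFirst k h₁) (rb.productive h₂),
      .seqnR ((ra.nullable_iff v).1 h₁) (rb.inFirst k h₂)]
  inSNF k h := by
    rcases inSNF_seqn_iff.1 h with ⟨h₁, v, h₂⟩ | ⟨h₁, h₂⟩
    exacts [.seqnL (ra.inSNF k h₁) ((rb.nullable_iff v).1 h₂),
      .seqnR (ra.productive h₁) (rb.inSNF k h₂)]
  hasConflict h := by
    rcases hasConflict_seqn_iff.1 h with ⟨k, h₁, h₂⟩ | h | h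
    exacts [.seqnSF (ra.inSNF k h₁) (rb.inFirst k h₂), .seqnL (ra.hasConflict h),
      .seqnR (rb.hasConflict h)]

theorem unfocus {A B : Type} {a b : Syn Token Kind Var A} (r : a.Refines env b)
    (c : Ctx Token Kind Var A B) : (_root_.unfocus a c).Refines env (_root_.unfocus b c) := by
  induction c with
  | nil => exact r
  | cons l c ih =>
    cases l with
    | apply f => exact ih (r.map f)
    | prepend v => exact ih ((refl _).seqn r)
    | followBy s' => exact ih (r.seqn (refl s'))

theorem eps_of_nullable {A : Type} {s : Syn Token Kind Var A} {v : A}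
    (hs : ¬ HasConflict env s) (hv : Nullable env s v) : (Syn.eps v).Refines env s where
  nullable_iff u := by
    constructor
    · rintro ⟨⟩
      exact hv
    · intro hu
      rw [hu.eq_of_not_hasConflict hv hs]
      exact .eps v
  productive _ := hv.productive
  inFirst _ h := nomatch h
  inSNF _ h := nomatch h
  hasConflict h := nomatch h

end Syn.Refines

variable (env) in
def IsNullOpt (nullOpt : ∀ {A : Type}, Syn Token Kind Var A → Option A) : Prop :=
  ∀ {A : Type} (s : Syn Token Kind Var A), ¬ HasConflict env s →
    ∀ v : A, nullOpt s = some v ↔ Nullable env s v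

structure IsResult (nullOpt : ∀ {A : Type}, Syn Token Kind Var A → Option A)
    (result : ∀ {B : Type}, Focused Token Kind Var B → Option B) : Prop where
  eq_none : ∀ {A B : Type} (s : Syn Token Kind Var A) (c : Ctx Token Kind Var A B),
    nullOpt s = none → result (⟨A, s, c⟩ : Focused Token Kind Var B) = none
  eq_some_of_nil : ∀ {A : Type} (s : Syn Token Kind Var A) (v : A),
    nullOpt s = some v → result (⟨A, s, Ctx.nil⟩ : Focused Token Kind Var A) = some v
  eq_plug : ∀ {A B : Type} (s : Syn Token Kind Var A) (c : Ctx Token Kind Var A B)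
    (v : A), nullOpt s = some v → c.isNil = false →
    result (⟨A, s, c⟩ : Focused Token Kind Var B) = result (plug v c)

variable {nullOpt : ∀ {A : Type}, Syn Token Kind Var A → Option A}
  {result : ∀ {B : Type}, Focused Token Kind Var B → Option B}

namespace IsNullOpt

theorem eps (hnull : IsNullOpt env nullOpt) {A : Type} (v : A) :
    nullOpt (Syn.eps v : Syn Token Kind Var A) = some v :=
  (hnull (Syn.eps v) (fun h => nomatch h) v).2 (.eps v)

theorem eq_of_refines (hnull : IsNullOpt env nullOpt) {A : Type}
    {a b : Syn Token Kind Var A} (r : a.Refines env b) (hb : ¬ HasConflict env b) :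
    nullOpt a = nullOpt b :=
  Option.ext fun v => by rw [hnull a (mt r.hasConflict hb), hnull b hb, r.nullable_iff]

theorem unfocus_eq_none (hnull : IsNullOpt env nullOpt) {A B : Type}
    {s : Syn Token Kind Var A} {c : Ctx Token Kind Var A B}
    (hsc : ¬ HasConflict env (unfocus s c)) (hs : nullOpt s = none) :
    nullOpt (unfocus s c) = none := by
  refine Option.eq_none_iff_forall_ne_some.2 fun w hw => ?_
  obtain ⟨v, hv⟩ := exists_nullable_of_nullable_unfocus ((hnull _ hsc w).1 hw)
  exact Option.some_ne_none v (((hnull s (mt (hasConflict_unfocus c) hsc) v).2 hv).symm.trans hs)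

end IsNullOpt

namespace IsResult

theorem eq_result_plug (hres : IsResult nullOpt result) (hnull : IsNullOpt env nullOpt)
    {A B : Type} {s : Syn Token Kind Var A} {c : Ctx Token Kind Var A B} {v : A}
    (hs : nullOpt s = some v) :
    result (⟨A, s, c⟩ : Focused Token Kind Var B) = result (plug v c) := by
  cases c with
  | nil => rw [hres.eq_some_of_nil s v hs, plug, hres.eq_some_of_nil _ v (hnull.eps v)]
  | cons l c => exact hres.eq_plug s _ v hs rfl

theorem eq_nullOpt_unfocus_of_plug (hres : IsResult nullOpt result)
    (hnull : IsNullOpt env nullOpt) {A B : Type} {s : Syn Token Kind Var A}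
    {c : Ctx Token Kind Var A B} (hsc : ¬ HasConflict env (unfocus s c))
    (hplug : ∀ v, Nullable env s v → result (plug v c) = nullOpt (unfocus s c)) :
    result (⟨A, s, c⟩ : Focused Token Kind Var B) = nullOpt (unfocus s c) := by
  cases hs : nullOpt s with
  | none => rw [hres.eq_none s c hs, hnull.unfocus_eq_none hsc hs]
  | some v =>
    rw [hres.eq_result_plug hnull hs]
    exact hplug v ((hnull s (mt (hasConflict_unfocus c) hsc) v).1 hs)

theorem plug_eq_nullOpt_unfocus (hres : IsResult nullOpt result)
    (hnull : IsNullOpt env nullOpt) {A B : Type} {c : Ctx Token Kind Var A B}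
    (ih : ∀ s : Syn Token Kind Var A, ¬ HasConflict env (unfocus s c) →
      result (⟨A, s, c⟩ : Focused Token Kind Var B) = nullOpt (unfocus s c))
    {t : Syn Token Kind Var A} {u : A} (htc : ¬ HasConflict env (unfocus t c))
    (hu : Nullable env t u) : result (plug u c) = nullOpt (unfocus t c) := by
  have r := (Syn.Refines.eps_of_nullable (mt (hasConflict_unfocus c) htc) hu).unfocus c
  rw [← hres.eq_result_plug hnull (hnull.eps u), ih _ (mt r.hasConflict htc),
    hnull.eq_of_refines r htc]

theorem eq_nullOpt_unfocus_prepend (hres : IsResult nullOpt result)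
    (hnull : IsNullOpt env nullOpt) {A B C : Type} {c : Ctx Token Kind Var (C × A) B}
    (ih : ∀ s : Syn Token Kind Var (C × A), ¬ HasConflict env (unfocus s c) →
      result (⟨C × A, s, c⟩ : Focused Token Kind Var B) = nullOpt (unfocus s c))
    (v : C) {t : Syn Token Kind Var A}
    (htc : ¬ HasConflict env (unfocus t (.cons (.prepend v) c))) :
    result (⟨A, t, .cons (.prepend v) c⟩ : Focused Token Kind Var B) =
      nullOpt (unfocus t (.cons (.prepend v) c)) :=
  hres.eq_nullOpt_unfocus_of_plug hnull htc fun _ hu =>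
    hres.plug_eq_nullOpt_unfocus hnull ih htc (.seqn (.eps v) hu)

end IsResult

end

section

variable {Token Kind : Type} {Var : Type → Type}
variable (kd : Token → Kind) (env : ∀ A : Type, Var A → Syn Token Kind Var A)

theorem result_correct
    (nullOpt : ∀ {A : Type}, Syn Token Kind Var A → Option A)
    (hnull : ∀ {A : Type} (s : Syn Token Kind Var A), ¬ HasConflict env s →
      ∀ v : A, nullOpt s = some v ↔ Nullable env s v)
    (result : ∀ {B : Type}, Focused Token Kind Var B → Option B)
    (hresult_none : ∀ {A B : Type} (s : Syn Token Kind Var A) (c : Ctx Token Kind Var A B),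
      nullOpt s = none → result (⟨A, s, c⟩ : Focused Token Kind Var B) = none)
    (hresult_nil : ∀ {A : Type} (s : Syn Token Kind Var A) (v : A),
      nullOpt s = some v → result (⟨A, s, Ctx.nil⟩ : Focused Token Kind Var A) = some v)
    (hresult_plug : ∀ {A B : Type} (s : Syn Token Kind Var A) (c : Ctx Token Kind Var A B)
      (v : A), nullOpt s = some v → c.isNil = false →
      result (⟨A, s, c⟩ : Focused Token Kind Var B) = result (plug v c))
    {A B : Type} (s : Syn Token Kind Var A) (c : Ctx Token Kind Var A B)
    (hll1 : ¬ HasConflict env (unfocus s c)) :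
    result (⟨A, s, c⟩ : Focused Token Kind Var B) = nullOpt (unfocus s c) := by
  have hres : IsResult nullOpt result := ⟨hresult_none, hresult_nil, hresult_plug⟩
  induction c with
  | nil =>
    refine hres.eq_nullOpt_unfocus_of_plug hnull hll1 fun v hv => ?_
    rw [plug, hresult_nil _ v (IsNullOpt.eps hnull v)]
    exact ((hnull s hll1 v).2 hv).symm
  | cons l c ih =>
    cases l with
    | apply f =>
      exact hres.eq_nullOpt_unfocus_of_plug hnull hll1 fun _ hv =>
        hres.plug_eq_nullOpt_unfocus hnull ih hll1 (.map f hv)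
    | prepend v => exact hres.eq_nullOpt_unfocus_prepend hnull ih v hll1
    | followBy s' =>
      refine hres.eq_nullOpt_unfocus_of_plug hnull hll1 fun v hv => ?_
      -- `plug v` focuses on `s'` in the context `prepend v`, which puts `eps v` in place of `s`.
      have r := ((Syn.Refines.eps_of_nullable (mt (hasConflict_unfocus _) hll1) hv).seqn
        (.refl s')).unfocus c
      exact (hres.eq_nullOpt_unfocus_prepend hnull ih v (mt r.hasConflict hll1)).trans
        (IsNullOpt.eq_of_refines hnull r hll1)

end
end

section
/- Unambiguity of LL(1) syntaxes: for every LL(1) syntax s : Syntax A (i.e. ¬HasConflict s), every token sequence ts, and all values v₁, v₂ : A, if Matches s ts v₁ and Matches s ts v₂ then v₁ = v₂. -/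
set_option autoImplicit false

/-!
LL(1) syntaxes are deterministic with one token of lookahead: if `s` matches `w` with
value `v` and `w'` with value `v'`, and `w ++ r = w' ++ r'` where neither remainder starts with
a token whose kind is in `ShouldNotFollow s`, then `w = w'` and `v = v'`. Unambiguity is the
case `r = r' = []`. The strengthened statement goes through by induction on the first
derivation, and the LL(1) conditions are exactly what keeps the lookahead hypothesis
invariant: in `seqn s₁ s₂` the remainder after `s₁` starts either with a token of `First s₂`,
which cannot lie in `ShouldNotFollow s₁`, or (when `s₂` matched `[]`) with the next token of
the whole remainder; in `disj s₁ s₂` a match of each branch on overlapping prefixes yields a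
nullable/nullable or first/first conflict, or puts the first token of a remainder in
`ShouldNotFollow (disj s₁ s₂)`.
-/

section

variable {Token Kind : Type} {Var : Type → Type}

def MayFollow (kd : Token → Kind) (env : ∀ A : Type, Var A → Syn Token Kind Var A) {A : Type}
    (s : Syn Token Kind Var A) (r : List Token) : Prop :=
  ∀ t ∈ r.head?, ¬ InSNF env (kd t) s

def MatchesStep (kd : Token → Kind) (env : ∀ A : Type, Var A → Syn Token Kind Var A) :
    ∀ {A : Type}, Syn Token Kind Var A → List Token → A → Prop
  | _, Syn.elem k, ts, v => ts = [v] ∧ kd v = k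
  | _, Syn.fail, _, _ => False
  | _, Syn.eps v₀, ts, v => ts = [] ∧ v = v₀
  | _, Syn.disj s₁ s₂, ts, v => Matches kd env s₁ ts v ∨ Matches kd env s₂ ts v
  | _, Syn.seqn s₁ s₂, ts, v => ∃ ts₁ ts₂ v₁ v₂, ts = ts₁ ++ ts₂ ∧ v = (v₁, v₂) ∧
      Matches kd env s₁ ts₁ v₁ ∧ Matches kd env s₂ ts₂ v₂
  | _, Syn.map f s, ts, v => ∃ w, v = f w ∧ Matches kd env s ts w
  | _, Syn.var x, ts, v => Matches kd env (env _ x) ts v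

variable {kd : Token → Kind} {env : ∀ A : Type, Var A → Syn Token Kind Var A}

namespace MayFollow

theorem nil {A : Type} {s : Syn Token Kind Var A} : MayFollow kd env s [] :=
  fun _ ht => nomatch ht

theorem mono {A B : Type} {s : Syn Token Kind Var A} {s' : Syn Token Kind Var B}
    {r : List Token} (hsub : ∀ k, InSNF env k s' → InSNF env k s)
    (hr : MayFollow kd env s r) : MayFollow kd env s' r :=
  fun t ht hsnf => hr t ht (hsub _ hsnf)

end MayFollow

namespace Matches

/-- `cases` cannot invert `Matches (Syn.seqn s₁ s₂)` directly, since it would have to solve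
`A × B = A' × B'`; the inversion lemmas below go through `MatchesStep` instead. -/
theorem step {A : Type} {s : Syn Token Kind Var A} {ts : List Token} {v : A}
    (h : Matches kd env s ts v) : MatchesStep kd env s ts v := by
  cases h with
  | elem h => exact ⟨rfl, h⟩
  | eps v => exact ⟨rfl, rfl⟩
  | disjL h => exact .inl h
  | disjR h => exact .inr h
  | seqn h₁ h₂ => exact ⟨_, _, _, _, rfl, rfl, h₁, h₂⟩
  | map f h => exact ⟨_, rfl, h⟩
  | var x h => exact h

theorem elem_inv {k : Kind} {ts : List Token} {v : Token}
    (h : Matches kd env (Syn.elem k) ts v) : ts = [v] ∧ kd v = k := h.step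

theorem eps_inv {A : Type} {v₀ : A} {ts : List Token} {v : A}
    (h : Matches kd env (Syn.eps v₀) ts v) : ts = [] ∧ v = v₀ := h.step

theorem disj_inv {A : Type} {s₁ s₂ : Syn Token Kind Var A} {ts : List Token} {v : A}
    (h : Matches kd env (Syn.disj s₁ s₂) ts v) :
    Matches kd env s₁ ts v ∨ Matches kd env s₂ ts v := h.step

theorem seqn_inv {A B : Type} {s₁ : Syn Token Kind Var A} {s₂ : Syn Token Kind Var B}
    {ts : List Token} {v : A × B} (h : Matches kd env (Syn.seqn s₁ s₂) ts v) :
    ∃ ts₁ ts₂ v₁ v₂, ts = ts₁ ++ ts₂ ∧ v = (v₁, v₂) ∧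
      Matches kd env s₁ ts₁ v₁ ∧ Matches kd env s₂ ts₂ v₂ := h.step

theorem map_inv {A B : Type} {f : A → B} {s : Syn Token Kind Var A} {ts : List Token} {v : B}
    (h : Matches kd env (Syn.map f s) ts v) : ∃ w, v = f w ∧ Matches kd env s ts w := h.step

theorem var_inv {A : Type} {x : Var A} {ts : List Token} {v : A}
    (h : Matches kd env (Syn.var x) ts v) : Matches kd env (env A x) ts v := h.step

theorem productive {A : Type} {s : Syn Token Kind Var A} {ts : List Token} {v : A}
    (h : Matches kd env s ts v) : Productive env s := by
  induction h with
  | elem => exact .elem _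
  | eps v => exact .eps v
  | disjL _ ih => exact .disjL ih
  | disjR _ ih => exact .disjR ih
  | seqn _ _ ih₁ ih₂ => exact .seqn ih₁ ih₂
  | map f _ ih => exact .map f ih
  | var x _ ih => exact .var x ih

theorem nullable_of_nil {A : Type} {s : Syn Token Kind Var A} {v : A}
    (h : Matches kd env s [] v) : Nullable env s v := by
  generalize hts : ([] : List Token) = ts at h
  induction h with
  | elem => cases hts
  | eps v => exact .eps v
  | disjL _ ih => exact .disjL (ih hts)
  | disjR _ ih => exact .disjR (ih hts)
  | seqn _ _ ih₁ ih₂ =>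
      obtain ⟨h₁, h₂⟩ := List.append_eq_nil_iff.mp hts.symm
      exact .seqn (ih₁ h₁.symm) (ih₂ h₂.symm)
  | map f _ ih => exact .map f (ih hts)
  | var x _ ih => exact .var x (ih hts)

theorem inFirst_of_cons {A : Type} {s : Syn Token Kind Var A} {t : Token} {ts : List Token}
    {v : A} (h : Matches kd env s (t :: ts) v) : InFirst env (kd t) s := by
  generalize hts : t :: ts = w at h
  induction h generalizing ts with
  | elem hk =>
      obtain ⟨rfl, -⟩ := List.cons.inj hts
      exact hk ▸ .elem _
  | eps => cases hts
  | disjL _ ih => exact .disjL (ih hts)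
  | disjR _ ih => exact .disjR (ih hts)
  | @seqn _ _ _ _ ts₁ _ _ _ h₁ h₂ ih₁ ih₂ =>
      cases ts₁ with
      | nil => exact .seqnR h₁.nullable_of_nil (ih₂ hts)
      | cons t' ts₁ =>
          obtain ⟨rfl, -⟩ := List.cons.inj hts
          exact .seqnL (ih₁ rfl) h₂.productive
  | map f _ ih => exact .map f (ih hts)
  | var x _ ih => exact .var x (ih hts)

end Matches

theorem MayFollow.append_of_seqn {A B : Type} {s₁ : Syn Token Kind Var A}
    {s₂ : Syn Token Kind Var B} {b r : List Token} {v : B}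
    (hc : ¬ HasConflict env (Syn.seqn s₁ s₂)) (h₂ : Matches kd env s₂ b v)
    (hr : MayFollow kd env (Syn.seqn s₁ s₂) r) : MayFollow kd env s₁ (b ++ r) := by
  intro t ht hsnf
  cases b with
  | nil => exact hr t ht (.seqnL hsnf h₂.nullable_of_nil)
  | cons t' b =>
      obtain rfl : t' = t := Option.some.inj ht
      exact hc (.seqnSF hsnf h₂.inFirst_of_cons)

theorem Matches.false_of_disj_branches {A : Type} {s₁ s₂ : Syn Token Kind Var A}
    {w w' r r' : List Token} {v v' : A} (hc : ¬ HasConflict env (Syn.disj s₁ s₂))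
    (h : Matches kd env s₁ w v) (h' : Matches kd env s₂ w' v')
    (hr : MayFollow kd env (Syn.disj s₁ s₂) r) (hr' : MayFollow kd env (Syn.disj s₁ s₂) r')
    (heq : w ++ r = w' ++ r') : False := by
  cases w with
  | nil =>
      cases w' with
      | nil => exact hc (.disjNN h.nullable_of_nil h'.nullable_of_nil)
      | cons t' w' =>
          subst heq
          exact hr t' rfl (.disjNF h.nullable_of_nil h'.inFirst_of_cons)
  | cons t w =>
      cases w' with
      | nil =>
          subst heq
          exact hr' t rfl (.disjFN h.inFirst_of_cons h'.nullable_of_nil)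
      | cons t' w' =>
          obtain ⟨rfl, -⟩ := List.cons.inj heq
          exact hc (.disjFF h.inFirst_of_cons h'.inFirst_of_cons)

theorem Matches.eq_of_append_eq_append {A : Type} {s : Syn Token Kind Var A}
    {w : List Token} {v : A} (h : Matches kd env s w v) (hc : ¬ HasConflict env s)
    {w' r r' : List Token} {v' : A} (h' : Matches kd env s w' v')
    (hr : MayFollow kd env s r) (hr' : MayFollow kd env s r') (heq : w ++ r = w' ++ r') :
    w = w' ∧ v = v' := by
  induction h generalizing w' r r' with
  | elem =>
      obtain ⟨rfl, -⟩ := h'.elem_inv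
      obtain ⟨rfl, -⟩ := List.cons.inj heq
      exact ⟨rfl, rfl⟩
  | eps =>
      obtain ⟨rfl, rfl⟩ := h'.eps_inv
      exact ⟨rfl, rfl⟩
  | disjL h ih =>
      rcases h'.disj_inv with h₁' | h₂'
      · exact ih (fun hx => hc (.disjL hx)) h₁' (hr.mono fun _ => .disjL)
          (hr'.mono fun _ => .disjL) heq
      · exact (h.false_of_disj_branches hc h₂' hr hr' heq).elim
  | disjR h ih =>
      rcases h'.disj_inv with h₁' | h₂'
      · exact (h₁'.false_of_disj_branches hc h hr' hr heq.symm).elim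
      · exact ih (fun hx => hc (.disjR hx)) h₂' (hr.mono fun _ => .disjR)
          (hr'.mono fun _ => .disjR) heq
  | seqn h₁ h₂ ih₁ ih₂ =>
      obtain ⟨a', b', v₁', v₂', rfl, rfl, h₁', h₂'⟩ := h'.seqn_inv
      simp only [List.append_assoc] at heq
      obtain ⟨rfl, rfl⟩ := ih₁ (fun hx => hc (.seqnL hx)) h₁'
        (hr.append_of_seqn hc h₂) (hr'.append_of_seqn hc h₂') heq
      obtain ⟨rfl, rfl⟩ := ih₂ (fun hx => hc (.seqnR hx)) h₂'
        (hr.mono fun _ => .seqnR h₁.productive) (hr'.mono fun _ => .seqnR h₁.productive)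
        (List.append_cancel_left heq)
      exact ⟨rfl, rfl⟩
  | map f _ ih =>
      obtain ⟨u, rfl, hu⟩ := h'.map_inv
      obtain ⟨rfl, hv⟩ := ih (fun hx => hc (.map f hx)) hu (hr.mono fun _ => .map f)
        (hr'.mono fun _ => .map f) heq
      exact ⟨rfl, congrArg f hv⟩
  | var x _ ih =>
      exact ih (fun hx => hc (.var x hx)) h'.var_inv (hr.mono fun _ => .var x)
        (hr'.mono fun _ => .var x) heq

end

section

variable {Token Kind : Type} {Var : Type → Type}
variable (kd : Token → Kind) (env : ∀ A : Type, Var A → Syn Token Kind Var A)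

theorem ll1_unambiguous
    {A : Type} (s : Syn Token Kind Var A) (hs : ¬ HasConflict env s)
    (ts : List Token) (v₁ v₂ : A)
    (h₁ : Matches kd env s ts v₁) (h₂ : Matches kd env s ts v₂) :
    v₁ = v₂ :=
  (h₁.eq_of_append_eq_append hs h₂ .nil .nil rfl).2

end
end
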